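/- arXiv:1409.0097 — 2 statements merged into one kernel-verified Lean document; each statement's English description precedes it below -/
import Mathlib

section
/- For every vector v in R^n and every real Q ≥ 1, there exist a positive integer q and an integer vector p in Z^n such that ‖q•v - p‖ < Q^(-1/n) (sup-norm) and q ≤ Q. -/
/-!
Minkowski's convex body theorem applied to the open symmetric convex set of `(q, p) ∈ ℝ × ℝⁿ` with
`|q| < ⌊Q⌋ + 1` and `|q vᵢ - pᵢ| < Q^(-1/n)`. This set is the preimage of a box of volume
`2ⁿ⁺¹ (⌊Q⌋ + 1) / Q > 2ⁿ⁺¹` under a shear, which is an involution and hence preserves volume, so it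
contains a nonzero integer point. Its `q`-coordinate cannot vanish, since then all `|pᵢ| < 1`;
replacing the point by its negative if necessary makes `q` positive.
-/

open MeasureTheory ENNReal

theorem exists_ne_zero_intCast_mem_of_two_pow_card_lt_volume {ι : Type*} [Fintype ι]
    {s : Set (ι → ℝ)} (h_symm : ∀ x ∈ s, -x ∈ s) (h_conv : Convex ℝ s)
    (h : 2 ^ Fintype.card ι < volume s) :
    ∃ z : ι → ℤ, z ≠ 0 ∧ (fun i => (z i : ℝ)) ∈ s := by
  let L := Submodule.span ℤ (Set.range (Pi.basisFun ℝ ι))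
  have : Countable L.toAddSubgroup := inferInstanceAs (Countable L)
  have fund := ZSpan.isAddFundamentalDomain' (Pi.basisFun ℝ ι) volume
  obtain ⟨x, hx0, hxs⟩ := exists_ne_zero_mem_lattice_of_measure_mul_two_pow_lt_measure fund
    h_symm h_conv (by simpa [ZSpan.fundamentalDomain_pi_basisFun, volume_pi_pi] using h)
  choose z hz using fun i => ((Pi.basisFun ℝ ι).mem_span_iff_repr_mem ℤ _).mp x.2 i
  have hxz : (x : ι → ℝ) = fun i => (z i : ℝ) := funext fun i => by simpa using (hz i).symm
  refine ⟨z, fun hz0 => hx0 ?_, hxz ▸ hxs⟩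
  ext i
  simp [hxz, hz0]

theorem LinearMap.addHaar_preimage_of_involutive {E : Type*} [NormedAddCommGroup E]
    [NormedSpace ℝ E] [MeasurableSpace E] [BorelSpace E] [FiniteDimensional ℝ E]
    (μ : Measure E) [μ.IsAddHaarMeasure] {f : E →ₗ[ℝ] E} (hf : Function.Involutive f)
    (s : Set E) : μ (f ⁻¹' s) = μ s := by
  have hdet : LinearMap.det f * LinearMap.det f = 1 := by
    rw [← LinearMap.det_comp, show f ∘ₗ f = LinearMap.id from LinearMap.ext hf, LinearMap.det_id]
  have habs : |LinearMap.det f| = 1 := by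
    rcases mul_self_eq_one_iff.mp hdet with h | h <;> simp [h]
  rw [Measure.addHaar_preimage_linearMap μ (left_ne_zero_of_mul_eq_one hdet), abs_inv, habs]
  simp

def dirichletShear {n : ℕ} (v : Fin n → ℝ) : (Fin (n + 1) → ℝ) →ₗ[ℝ] (Fin (n + 1) → ℝ) where
  toFun x := Fin.cons (x 0) fun i => v i * x 0 - x i.succ
  map_add' x y := by
    ext i; cases i using Fin.cases <;> simp; ring
  map_smul' c x := by
    ext i; cases i using Fin.cases <;> simp; ring

theorem dirichletShear_involutive {n : ℕ} (v : Fin n → ℝ) :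
    Function.Involutive (dirichletShear v) := by
  intro x; ext i; cases i using Fin.cases <;> simp [dirichletShear]

theorem exists_int_ne_zero_abs_lt_abs_mul_sub_lt {n : ℕ} (v : Fin n → ℝ) {B δ : ℝ} (hδ : 0 < δ)
    (h : 1 < B * δ ^ n) :
    ∃ z : Fin (n + 1) → ℤ, z ≠ 0 ∧ |(z 0 : ℝ)| < B ∧ ∀ i, |v i * z 0 - z i.succ| < δ := by
  let box : Set (Fin (n + 1) → ℝ) :=
    Set.univ.pi (Fin.cons (Set.Ioo (-B) B) fun _ => Set.Ioo (-δ) δ)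
  have hB : 0 < B := pos_of_mul_pos_left (one_pos.trans h) (by positivity)
  have hvol : volume box = ENNReal.ofReal (2 * B * (2 * δ) ^ n) := by
    rw [volume_pi_pi, Fin.prod_univ_succ]
    simp only [Fin.cons_zero, Fin.cons_succ, Real.volume_Ioo, Finset.prod_const, Finset.card_univ,
      Fintype.card_fin]
    rw [ENNReal.ofReal_mul (by positivity), ENNReal.ofReal_pow (by positivity)]
    ring_nf
  have h_symm : ∀ x ∈ dirichletShear v ⁻¹' box, -x ∈ dirichletShear v ⁻¹' box := by
    intro x hx i _
    have := hx i trivial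
    cases i using Fin.cases <;> simp_all [neg_lt]
  have h_conv : Convex ℝ (dirichletShear v ⁻¹' box) := by
    refine (convex_pi fun i _ => ?_).linear_preimage _
    cases i using Fin.cases <;> exact convex_Ioo _ _
  have h_vol : 2 ^ (n + 1) < volume (dirichletShear v ⁻¹' box) := by
    have h2 : (2 : ℝ≥0∞) ^ (n + 1) = ENNReal.ofReal (2 ^ (n + 1)) := by
      rw [ENNReal.ofReal_pow zero_le_two, ENNReal.ofReal_ofNat]
    rw [LinearMap.addHaar_preimage_of_involutive _ (dirichletShear_involutive v), hvol, h2,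
      ENNReal.ofReal_lt_ofReal_iff (by positivity), mul_pow, pow_succ]
    nlinarith [pow_pos (two_pos (α := ℝ)) n]
  obtain ⟨z, hz, hzs⟩ := exists_ne_zero_intCast_mem_of_two_pow_card_lt_volume h_symm h_conv
    (by simpa using h_vol)
  refine ⟨z, hz, ?_, fun i => ?_⟩
  · simpa [box, dirichletShear, abs_lt] using hzs 0 trivial
  · simpa [box, dirichletShear, abs_lt] using hzs i.succ trivial

theorem exists_nat_pos_lt_abs_mul_sub_lt {n : ℕ} (v : Fin n → ℝ) {B δ : ℝ} (hδ : 0 < δ)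
    (hδ1 : δ ≤ 1) (h : 1 < B * δ ^ n) :
    ∃ (q : ℕ) (p : Fin n → ℤ), 0 < q ∧ (q : ℝ) < B ∧ ∀ i, |q * v i - p i| < δ := by
  obtain ⟨z, hz, hzB, hzδ⟩ := exists_int_ne_zero_abs_lt_abs_mul_sub_lt v hδ h
  have hz0 : z 0 ≠ 0 := by
    refine fun hz0 => hz (funext fun i => ?_)
    cases i using Fin.cases with
    | zero => exact hz0
    | succ i =>
      have := (hzδ i).trans_le hδ1
      rw [hz0, Int.cast_zero, mul_zero, zero_sub, abs_neg, ← Int.cast_abs, ← Int.cast_one,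
        Int.cast_lt, Int.abs_lt_one_iff] at this
      exact this
  have h_natAbs : ((z 0).natAbs : ℝ) = (z 0).sign * z 0 := by
    rw [← Int.cast_mul, Int.sign_mul_self_eq_natAbs, Int.cast_natCast]
  refine ⟨(z 0).natAbs, fun i => (z 0).sign * z i.succ, Int.natAbs_pos.mpr hz0, ?_, fun i => ?_⟩
  · rwa [Nat.cast_natAbs, Int.cast_abs]
  · have h_sign : |((z 0).sign : ℝ)| = 1 := by
      rw [← Int.cast_abs, Int.abs_sign_of_ne_zero hz0, Int.cast_one]
    calc |((z 0).natAbs : ℝ) * v i - ((z 0).sign * z i.succ : ℤ)|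
        = |((z 0).sign : ℝ)| * |v i * z 0 - z i.succ| := by
          rw [h_natAbs, ← abs_mul]; push_cast; ring_nf
      _ < δ := by rw [h_sign, one_mul]; exact hzδ i

theorem dirichlet_simultaneous_general (n : ℕ) (v : Fin n → ℝ) (Q : ℝ) (hQ : 1 ≤ Q) :
    ∃ (q : ℕ) (p : Fin n → ℤ), 0 < q ∧ (q : ℝ) ≤ Q ∧
      ‖(q : ℝ) • v - (fun i => (p i : ℝ))‖ < Q ^ (-(1 : ℝ) / n) := by
  have hQ0 : 0 < Q := one_pos.trans_le hQ
  set δ := Q ^ (-(1 : ℝ) / n)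
  have hδ : 0 < δ := Real.rpow_pos_of_pos hQ0 _
  have hδ1 : δ ≤ 1 := Real.rpow_le_one_of_one_le_of_nonpos hQ
    (div_nonpos_of_nonpos_of_nonneg (by norm_num) n.cast_nonneg)
  have hδn : Q⁻¹ ≤ δ ^ n := by
    rw [← Real.rpow_natCast, ← Real.rpow_mul hQ0.le, ← Real.rpow_neg_one]
    refine Real.rpow_le_rpow_of_exponent_le hQ ?_
    rw [neg_div, one_div, neg_mul, neg_le_neg_iff]
    exact inv_mul_le_one
  have hB : 1 < (⌊Q⌋₊ + 1 : ℝ) * δ ^ n := calc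
    1 < (⌊Q⌋₊ + 1 : ℝ) * Q⁻¹ := by
      rw [← div_eq_mul_inv, one_lt_div hQ0]; exact Nat.lt_floor_add_one Q
    _ ≤ (⌊Q⌋₊ + 1 : ℝ) * δ ^ n := by gcongr
  obtain ⟨q, p, hq, hqB, hqp⟩ := exists_nat_pos_lt_abs_mul_sub_lt v hδ hδ1 hB
  refine ⟨q, p, hq, ?_, (pi_norm_lt_iff hδ).mpr fun i => ?_⟩
  · exact (Nat.le_floor_iff hQ0.le).mp (Nat.lt_succ_iff.mp (by exact_mod_cast hqB))
  · simpa using hqp i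

/-- Dirichlet's theorem on simultaneous Diophantine approximation:
for every `v : ℝⁿ` (with sup-norm) and every real `Q ≥ 1`, there exist a positive
integer `q` and an integer vector `p` with `‖q • v - p‖ < Q^(-1/n)` and `q ≤ Q`. -/
theorem dirichlet_simultaneous (n : ℕ) (hn : 0 < n) (v : Fin n → ℝ) (Q : ℝ) (hQ : 1 ≤ Q) :
    ∃ (q : ℕ) (p : Fin n → ℤ), 0 < q ∧ (q : ℝ) ≤ Q ∧
      ‖(q : ℝ) • v - (fun i => (p i : ℝ))‖ < Q ^ (-(1 : ℝ) / n) :=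
  dirichlet_simultaneous_general n v Q hQ
end

section
/- Let g ∈ SL₃(R) and let g⁻¹U⁺g ∩ SL₃(Z) be a lattice in g⁻¹U⁺g, where U⁺ is the full upper triangular unipotent subgroup. Then there exists g₀ ∈ SL₃(Q) such that g⁻¹U⁺g = g₀⁻¹U⁺g₀. -/
/-!
The superdiagonal entries `(y₀₁, y₁₂)` define a homomorphism `U⁺ → ℝ²` whose kernel is the
centre. Cocompactness makes the image of the lattice relatively dense in `ℝ²`, so it contains two
independent vectors; for the corresponding lattice elements `l₁, l₂` the integer matrix
`N = l₁l₂ - l₂l₁` is then nonzero and of the form `g⁻¹ (d E₀₂) g`. Its image `g⁻¹⟨e₀⟩` and kernel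
`g⁻¹⟨e₀, e₁⟩` form the flag fixed by `g⁻¹U⁺g`; being the image and kernel of a rational matrix,
this flag has an adapted rational basis `P` with `det P = 1`. Then `gP` is upper triangular, and
since upper triangular matrices normalize `U⁺`, `g⁻¹U⁺g = P U⁺ P⁻¹`.
-/

open Matrix

/-- The full upper triangular unipotent subgroup of `SL₃(ℝ)`, as a set of matrices. -/
def Uplus : Set (Matrix (Fin 3) (Fin 3) ℝ) :=
  {m | (∀ i : Fin 3, m i i = 1) ∧ (∀ i j : Fin 3, j < i → m i j = 0) ∧ m.det = 1}

theorem Matrix.IsUpperTriangular.mul_apply_self {m R : Type*} [Fintype m] [LinearOrder m]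
    [NonUnitalNonAssocSemiring R] {A B : Matrix m m R} (hA : A.IsUpperTriangular)
    (hB : B.IsUpperTriangular) (i : m) : (A * B) i i = A i i * B i i := by
  rw [mul_apply, Finset.sum_eq_single i]
  · intro k _ hki
    rcases lt_or_gt_of_ne hki with h | h
    · rw [hA h, zero_mul]
    · rw [hB h, mul_zero]
  · simp

theorem mem_Uplus_iff {x : Matrix (Fin 3) (Fin 3) ℝ} :
    x ∈ Uplus ↔ x.IsUpperTriangular ∧ ∀ i, x i i = 1 := by
  refine ⟨fun ⟨hdiag, htri, _⟩ => ⟨fun i j h => htri i j h, hdiag⟩,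
    fun ⟨htri, hdiag⟩ => ⟨hdiag, fun i j h => htri h, ?_⟩⟩
  simp [det_of_isUpperTriangular htri, hdiag]

theorem eq_of_mem_Uplus {x : Matrix (Fin 3) (Fin 3) ℝ} (hx : x ∈ Uplus) :
    x = !![1, x 0 1, x 0 2; 0, 1, x 1 2; 0, 0, 1] := by
  obtain ⟨hdiag, htri, -⟩ := hx
  ext i j
  fin_cases i <;> fin_cases j <;> simp [hdiag, htri]

theorem conj_mem_Uplus {b x : Matrix (Fin 3) (Fin 3) ℝ} (hb : b.IsUpperTriangular)
    (hbdet : IsUnit b.det) (hx : x ∈ Uplus) : b⁻¹ * x * b ∈ Uplus := by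
  let := b.invertibleOfIsUnitDet hbdet
  have hb' : b⁻¹.IsUpperTriangular := blockTriangular_inv_of_blockTriangular hb
  rw [mem_Uplus_iff] at hx ⊢
  have hb'x : (b⁻¹ * x).IsUpperTriangular := hb'.mul hx.1
  refine ⟨hb'x.mul hb, fun i => ?_⟩
  rw [hb'x.mul_apply_self hb, hb'.mul_apply_self hx.1, hx.2, mul_one,
    ← hb'.mul_apply_self hb, inv_mul_of_invertible, one_apply_eq]

theorem image_conj_Uplus_of_isUpperTriangular {b : Matrix (Fin 3) (Fin 3) ℝ}
    (hb : b.IsUpperTriangular) (hbdet : IsUnit b.det) :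
    (fun x => b⁻¹ * x * b) '' Uplus = Uplus := by
  refine Set.Subset.antisymm (Set.image_subset_iff.2 fun x hx => conj_mem_Uplus hb hbdet hx)
    fun x hx => ?_
  refine ⟨b * x * b⁻¹, ?_, ?_⟩
  · let := b.invertibleOfIsUnitDet hbdet
    simpa [nonsing_inv_nonsing_inv _ hbdet] using conj_mem_Uplus
      (blockTriangular_inv_of_blockTriangular hb) (isUnit_nonsing_inv_det _ hbdet) hx
  · simp [Matrix.mul_assoc, nonsing_inv_mul _ hbdet, nonsing_inv_mul_cancel_left _ _ hbdet]

theorem image_conj_mul_Uplus {b : Matrix (Fin 3) (Fin 3) ℝ} (hb : b.IsUpperTriangular)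
    (hbdet : IsUnit b.det) (h : Matrix (Fin 3) (Fin 3) ℝ) :
    (fun x => (b * h)⁻¹ * x * (b * h)) '' Uplus = (fun x => h⁻¹ * x * h) '' Uplus := by
  conv_rhs => rw [← image_conj_Uplus_of_isUpperTriangular hb hbdet, Set.image_image]
  simp only [Matrix.mul_inv_rev, Matrix.mul_assoc]

def superdiag (y : Matrix (Fin 3) (Fin 3) ℝ) : ℝ × ℝ := (y 0 1, y 1 2)

theorem superdiag_mul {x y : Matrix (Fin 3) (Fin 3) ℝ} (hx : x ∈ Uplus) (hy : y ∈ Uplus) :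
    superdiag (x * y) = superdiag x + superdiag y := by
  rw [eq_of_mem_Uplus hx, eq_of_mem_Uplus hy]
  simp [superdiag, add_comm]

theorem mul_sub_mul_of_mem_Uplus {x y : Matrix (Fin 3) (Fin 3) ℝ} (hx : x ∈ Uplus)
    (hy : y ∈ Uplus) :
    x * y - y * x = single 0 2 (x 0 1 * y 1 2 - x 1 2 * y 0 1) := by
  rw [eq_of_mem_Uplus hx, eq_of_mem_Uplus hy]
  ext i j
  fin_cases i <;> fin_cases j <;> simp [single] <;> ring

theorem exists_mem_Uplus_superdiag_eq (v : ℝ × ℝ) : ∃ y ∈ Uplus, superdiag y = v :=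
  ⟨!![1, v.1, 0; 0, 1, v.2; 0, 0, 1],
    mem_Uplus_iff.2 ⟨by intro i j h; fin_cases i <;> fin_cases j <;> simp_all,
      by intro i; fin_cases i <;> simp⟩, rfl⟩

theorem exists_apply_ne_zero_of_forall_add_mem {E : Type*} [AddCommGroup E] [Module ℝ E]
    [TopologicalSpace E] {f : E →L[ℝ] ℝ} (hf : f ≠ 0) {S K : Set E} (hK : IsCompact K)
    (hSK : ∀ x, ∃ s ∈ S, x + s ∈ K) : ∃ s ∈ S, f s ≠ 0 := by
  obtain ⟨C, hC⟩ := hK.bddAbove_image f.continuous.continuousOn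
  obtain ⟨x₀, hx₀⟩ := DFunLike.ne_iff.1 hf
  obtain ⟨s, hs, hsK⟩ := hSK (((C + 1) / f x₀) • x₀)
  refine ⟨s, hs, fun hfs => ?_⟩
  have := hC ⟨_, hsK, rfl⟩
  rw [map_add, hfs, map_smul, smul_eq_mul, div_mul_cancel₀ _ hx₀] at this
  linarith

theorem exists_superdiag_independent_of_cocompact {g : Matrix (Fin 3) (Fin 3) ℝ}
    (hg : IsUnit g.det) {L K : Set (Matrix (Fin 3) (Fin 3) ℝ)}
    (hL : L ⊆ (fun x => g⁻¹ * x * g) '' Uplus)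
    (hK : IsCompact K) (hLK : ∀ c ∈ (fun x => g⁻¹ * x * g) '' Uplus, ∃ l ∈ L, c * l ∈ K) :
    ∃ y₁ ∈ Uplus, ∃ y₂ ∈ Uplus, g⁻¹ * y₁ * g ∈ L ∧ g⁻¹ * y₂ * g ∈ L ∧
      y₁ 0 1 * y₂ 1 2 - y₁ 1 2 * y₂ 0 1 ≠ 0 := by
  let π x := superdiag (g * x * g⁻¹)
  have hπ : ∀ y, π (g⁻¹ * y * g) = superdiag y := fun y => by
    simp [π, Matrix.mul_assoc, mul_nonsing_inv_cancel_left _ _ hg, mul_nonsing_inv _ hg]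
  set S := superdiag '' {y ∈ Uplus | g⁻¹ * y * g ∈ L}
  have hSK : ∀ v, ∃ s ∈ S, v + s ∈ π '' K := by
    intro v
    obtain ⟨y, hy, rfl⟩ := exists_mem_Uplus_superdiag_eq v
    obtain ⟨l, hl, hlK⟩ := hLK _ ⟨y, hy, rfl⟩
    obtain ⟨y', hy', rfl⟩ := hL hl
    refine ⟨superdiag y', ⟨y', ⟨hy', hl⟩, rfl⟩, _, hlK, ?_⟩
    rw [← superdiag_mul hy hy', ← hπ]
    simp [Matrix.mul_assoc, mul_nonsing_inv_cancel_left _ _ hg]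
  have hπK : IsCompact (π '' K) := hK.image (by simp only [π, superdiag]; fun_prop)
  -- First a point of `S` off the line `v₁ = 0`, then a point of `S` off the line through it.
  obtain ⟨_, ⟨y₁, ⟨hy₁, hl₁⟩, rfl⟩, h₁⟩ :=
    exists_apply_ne_zero_of_forall_add_mem (f := .fst ℝ ℝ ℝ)
      (DFunLike.ne_iff.2 ⟨(1, 0), by simp⟩) hπK hSK
  obtain ⟨_, ⟨y₂, ⟨hy₂, hl₂⟩, rfl⟩, h₂⟩ :=
    exists_apply_ne_zero_of_forall_add_mem
      (f := y₁ 0 1 • .snd ℝ ℝ ℝ - y₁ 1 2 • .fst ℝ ℝ ℝ)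
      (DFunLike.ne_iff.2 ⟨(0, 1), by simpa [superdiag] using h₁⟩) hπK hSK
  exact ⟨y₁, hy₁, y₂, hy₂, hl₁, hl₂, by simpa [superdiag] using h₂⟩

/-- When `N` has rank one, `N² = 0` and `N i₀ j₀ ≠ 0`, the first column spans the line `range N`,
the first two span the plane `ker N`, and the third is scaled so that the determinant is `1`. -/
def flagBasis {K : Type*} [Field K] (N : Matrix (Fin 3) (Fin 3) K) (i₀ j₀ : Fin 3) :
    Matrix (Fin 3) (Fin 3) K :=
  let u := fun i => N i j₀
  let v := N i₀ ⨯₃ u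
  (of ![u, v, (v ⬝ᵥ v)⁻¹ • N i₀])ᵀ

section flagBasis

variable {K : Type*} [Field K] (N : Matrix (Fin 3) (Fin 3) K) (i₀ j₀ : Fin 3)

theorem flagBasis_apply_zero (k : Fin 3) : flagBasis N i₀ j₀ k 0 = N k j₀ := rfl

theorem flagBasis_apply_one (k : Fin 3) :
    flagBasis N i₀ j₀ k 1 = (N i₀ ⨯₃ fun i => N i j₀) k := rfl

theorem flagBasis_apply_two (k : Fin 3) :
    flagBasis N i₀ j₀ k 2 =
      ((N i₀ ⨯₃ fun i => N i j₀) ⬝ᵥ (N i₀ ⨯₃ fun i => N i j₀))⁻¹ * N i₀ k := rfl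

theorem flagBasis_map {L : Type*} [Field L] (f : K →+* L) :
    (flagBasis N i₀ j₀).map f = flagBasis (N.map f) i₀ j₀ := by
  ext i j
  fin_cases j <;> fin_cases i <;>
    simp [flagBasis_apply_zero, flagBasis_apply_one, flagBasis_apply_two, cross_apply,
      dotProduct, Fin.sum_univ_three]

theorem det_flagBasis [LinearOrder K] [IsStrictOrderedRing K] (hN : N * N = 0)
    (h : N i₀ j₀ ≠ 0) : (flagBasis N i₀ j₀).det = 1 := by
  set u : Fin 3 → K := fun i => N i j₀
  set w := N i₀
  have hwu : w ⬝ᵥ u = 0 := by rw [← mul_apply', hN, Matrix.zero_apply]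
  have hu : u ⬝ᵥ u ≠ 0 := fun h' => h (congrFun (dotProduct_self_eq_zero.1 h') i₀)
  have hw : w ⬝ᵥ w ≠ 0 := fun h' => h (congrFun (dotProduct_self_eq_zero.1 h') j₀)
  have hv : (w ⨯₃ u) ⬝ᵥ (w ⨯₃ u) ≠ 0 := by
    rw [cross_dot_cross, hwu, dotProduct_comm u w, hwu]
    simpa using mul_ne_zero hw hu
  rw [flagBasis, det_transpose]
  refine (triple_product_eq_det u (w ⨯₃ u) ((w ⨯₃ u ⬝ᵥ w ⨯₃ u)⁻¹ • w)).symm.trans ?_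
  rw [map_smul, dotProduct_smul, triple_product_permutation u, smul_eq_mul, inv_mul_cancel₀ hv]

end flagBasis

theorem isUpperTriangular_mul_flagBasis {K : Type*} [Field K] {g : Matrix (Fin 3) (Fin 3) K}
    (hg : IsUnit g.det) {d : K} {i₀ j₀ : Fin 3}
    (h : (g⁻¹ * single 0 2 d * g : Matrix (Fin 3) (Fin 3) K) i₀ j₀ ≠ 0) :
    (g * flagBasis (g⁻¹ * single 0 2 d * g) i₀ j₀).IsUpperTriangular := by
  set N := g⁻¹ * single 0 2 d * g
  have hgN : g * N = single 0 2 d * g := by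
    simp only [N, Matrix.mul_assoc, mul_nonsing_inv_cancel_left _ _ hg]
  have hN : ∀ i j, N i j = g⁻¹ i 0 * d * g 2 j := by
    intro i j
    simp [N, mul_apply, single, Fin.sum_univ_three]
  have hc : g⁻¹ i₀ 0 * d ≠ 0 := by
    rw [hN] at h
    exact left_ne_zero_of_mul h
  have hrow : g 2 = (g⁻¹ i₀ 0 * d)⁻¹ • N i₀ := by
    ext j
    rw [Pi.smul_apply, smul_eq_mul, hN, inv_mul_cancel_left₀ hc]
  have hcol0 : ∀ i, i ≠ 0 → (g * flagBasis N i₀ j₀) i 0 = 0 := by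
    intro i hi
    simp only [mul_apply, flagBasis_apply_zero]
    rw [← mul_apply, hgN, single_mul_apply_of_ne _ _ _ _ _ hi]
  have hcol1 : (g * flagBasis N i₀ j₀) 2 1 = 0 := by
    rw [mul_apply', hrow]
    simp [flagBasis_apply_one, smul_dotProduct, dot_self_cross]
  intro i j hij
  fin_cases i <;> fin_cases j <;> simp at hij
  all_goals first | exact hcol0 _ (by decide) | exact hcol1

theorem exists_rat_isUpperTriangular_mul_inv {g : Matrix (Fin 3) (Fin 3) ℝ} (hg : IsUnit g.det)
    {d : ℝ} (hd : d ≠ 0) {N : Matrix (Fin 3) (Fin 3) ℚ}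
    (hN : N.map (Rat.castHom ℝ) = g⁻¹ * single 0 2 d * g) :
    ∃ g₀ : Matrix (Fin 3) (Fin 3) ℚ, g₀.det = 1 ∧
      (g * (g₀.map (Rat.castHom ℝ))⁻¹).IsUpperTriangular := by
  have hsq : N * N = 0 := by
    apply map_injective (f := Rat.castHom ℝ) Rat.cast_injective
    dsimp only
    rw [Matrix.map_mul, hN, Matrix.map_zero _ (map_zero _)]
    simp only [Matrix.mul_assoc, mul_nonsing_inv_cancel_left _ _ hg]
    rw [← Matrix.mul_assoc (single 0 2 d), single_mul_single_of_ne _ _ _ _ (by decide)]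
    simp
  obtain ⟨i₀, j₀, hij⟩ : ∃ i j, N i j ≠ 0 := by
    by_contra! hzero
    have hsingle : single 0 2 d = g * N.map (Rat.castHom ℝ) * g⁻¹ := by
      rw [hN]
      simp [Matrix.mul_assoc, mul_nonsing_inv_cancel_left _ _ hg, mul_nonsing_inv _ hg]
    rw [(Matrix.ext hzero : N = 0), Matrix.map_zero _ (map_zero _)] at hsingle
    exact hd (by simpa using congr_fun (congr_fun hsingle 0) 2)
  set P := flagBasis N i₀ j₀
  have hP : P.det = 1 := det_flagBasis N i₀ j₀ hsq hij
  have hPinv : ((P⁻¹).map (Rat.castHom ℝ))⁻¹ = P.map (Rat.castHom ℝ) :=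
    inv_eq_left_inv <| by
      rw [← Matrix.map_mul, mul_nonsing_inv _ (by simp [hP]),
        Matrix.map_one _ (map_zero _) (map_one _)]
  refine ⟨P⁻¹, by simp [hP], ?_⟩
  rw [hPinv, flagBasis_map, hN]
  refine isUpperTriangular_mul_flagBasis hg ?_
  rw [← hN]
  simpa using hij

theorem exists_rat_map_eq_of_forall_int {m n : Type*} {M : Matrix m n ℝ}
    (h : ∀ i j, ∃ k : ℤ, M i j = k) : ∃ Q : Matrix m n ℚ, Q.map (Rat.castHom ℝ) = M := by
  choose k hk using h
  exact ⟨of fun i j => (k i j : ℚ), by ext i j; simp [hk]⟩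

theorem conjugate_unipotent_rational_general (g : Matrix (Fin 3) (Fin 3) ℝ) (hg : g.det = 1)
    (L : Set (Matrix (Fin 3) (Fin 3) ℝ))
    (hL : L = ((fun x => g⁻¹ * x * g) '' Uplus) ∩
      {m | ∀ i j : Fin 3, ∃ k : ℤ, m i j = (k : ℝ)})
    -- cocompactness: a compact subset of the conjugated group meets every coset of `L`:
    (hcocpt : ∃ K : Set (Matrix (Fin 3) (Fin 3) ℝ), IsCompact K ∧
      K ⊆ (fun x => g⁻¹ * x * g) '' Uplus ∧
      ∀ c ∈ (fun x => g⁻¹ * x * g) '' Uplus, ∃ l ∈ L, c * l ∈ K) :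
    ∃ g₀ : Matrix (Fin 3) (Fin 3) ℚ, g₀.det = 1 ∧
      (fun x => g⁻¹ * x * g) '' Uplus =
        (fun x => (g₀.map (Rat.cast : ℚ → ℝ))⁻¹ * x * g₀.map (Rat.cast : ℚ → ℝ)) '' Uplus := by
  obtain ⟨K, hK, -, hLK⟩ := hcocpt
  have hgu : IsUnit g.det := hg ▸ isUnit_one
  subst hL
  obtain ⟨y₁, hy₁, y₂, hy₂, ⟨-, hl₁⟩, ⟨-, hl₂⟩, hd⟩ :=
    exists_superdiag_independent_of_cocompact hgu Set.inter_subset_left hK hLK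
  obtain ⟨Q₁, hQ₁⟩ := exists_rat_map_eq_of_forall_int hl₁
  obtain ⟨Q₂, hQ₂⟩ := exists_rat_map_eq_of_forall_int hl₂
  obtain ⟨g₀, hg₀, htri⟩ := exists_rat_isUpperTriangular_mul_inv hgu hd
    (N := Q₁ * Q₂ - Q₂ * Q₁) <| by
      rw [Matrix.map_sub _ (map_sub _), Matrix.map_mul, Matrix.map_mul, hQ₁, hQ₂,
        ← mul_sub_mul_of_mem_Uplus hy₁ hy₂]
      simp [Matrix.mul_sub, Matrix.sub_mul, Matrix.mul_assoc, mul_nonsing_inv_cancel_left _ _ hgu]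
  refine ⟨g₀, hg₀, ?_⟩
  set G := g₀.map (Rat.cast : ℚ → ℝ)
  replace htri : (g * G⁻¹).IsUpperTriangular := htri
  have hG : G.det = 1 := by simp [G, ← Rat.cast_det, hg₀]
  rw [← nonsing_inv_mul_cancel_right G g (hG ▸ isUnit_one)]
  exact image_conj_mul_Uplus htri (by simp [hg, hG]) G

/-- If `g ∈ SL₃(ℝ)` is such that `g⁻¹ U⁺ g ∩ SL₃(ℤ)` is a lattice in `g⁻¹ U⁺ g`
(i.e. the integer points form a discrete cocompact subgroup of the conjugated
unipotent group), then `g⁻¹ U⁺ g = g₀⁻¹ U⁺ g₀` for some rational `g₀ ∈ SL₃(ℚ)`. -/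
theorem conjugate_unipotent_rational (g : Matrix (Fin 3) (Fin 3) ℝ) (hg : g.det = 1)
    (L : Set (Matrix (Fin 3) (Fin 3) ℝ))
    (hL : L = ((fun x => g⁻¹ * x * g) '' Uplus) ∩
      {m | ∀ i j : Fin 3, ∃ k : ℤ, m i j = (k : ℝ)})
    -- discreteness of the integer points:
    (hdisc : ∃ ε > (0:ℝ), ∀ l ∈ L, l ≠ 1 → ∃ i j : Fin 3, ε ≤ |l i j - (1 : Matrix (Fin 3) (Fin 3) ℝ) i j|)
    -- cocompactness: a compact subset of the conjugated group meets every coset of `L`: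
    (hcocpt : ∃ K : Set (Matrix (Fin 3) (Fin 3) ℝ), IsCompact K ∧
      K ⊆ (fun x => g⁻¹ * x * g) '' Uplus ∧
      ∀ c ∈ (fun x => g⁻¹ * x * g) '' Uplus, ∃ l ∈ L, c * l ∈ K) :
    ∃ g₀ : Matrix (Fin 3) (Fin 3) ℚ, g₀.det = 1 ∧
      (fun x => g⁻¹ * x * g) '' Uplus =
        (fun x => (g₀.map (Rat.cast : ℚ → ℝ))⁻¹ * x * g₀.map (Rat.cast : ℚ → ℝ)) '' Uplus :=
  conjugate_unipotent_rational_general g hg L hL hcocpt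
end
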